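/- If μ_MAP(θ₀) = A(Σ_like⁻¹ μ_like + Σ_prior⁻¹ θ₀) with A = (Σ_like⁻¹ + Σ_prior⁻¹)⁻¹, and θ₀^{(1)}, …, θ₀^{(M)} are i.i.d. with mean μ_prior and covariance Σ_prior + Σ_prior Σ_like⁻¹ Σ_prior, then the sample mean (1/M) Σ_i μ_MAP(θ₀^{(i)}) has expectation μ_post and covariance (1/M) Σ_post. -/

import Mathlib

open Matrix MeasureTheory ProbabilityTheory

/-- Componentwise mean of a random vector. -/
noncomputable def vmean {d : ℕ} {Ω : Type*} [MeasureSpace Ω] (X : Ω → Fin d → ℝ) :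
    Fin d → ℝ := fun i => ∫ ω, X ω i

/-- Covariance matrix of a random vector. -/
noncomputable def vcov {d : ℕ} {Ω : Type*} [MeasureSpace Ω] (X : Ω → Fin d → ℝ) :
    Matrix (Fin d) (Fin d) ℝ :=
  Matrix.of fun i j => ∫ ω, (X ω i - vmean X i) * (X ω j - vmean X j)

lemma memL2_mul_integrable {Ω : Type*} [MeasureSpace Ω]
    {f g : Ω → ℝ} (hf : MemLp f 2 ℙ) (hg : MemLp g 2 ℙ) :
    Integrable (fun ω => f ω * g ω) ℙ := by
  have h1 := (hf.add hg).integrable_sq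
  have h2 := hf.integrable_sq
  have h3 := hg.integrable_sq
  have h := (((h1.sub h2).sub h3).const_mul ((1:ℝ)/2))
  have heq : (fun ω => f ω * g ω)
      = fun ω => (1/2 : ℝ) * (((f + g) ω) ^ 2 - (f ω) ^ 2 - (g ω) ^ 2) := by
    funext ω; simp only [Pi.add_apply]; ring
  rw [heq]; exact h

lemma matalg {d : ℕ} (Sp Sl : Matrix (Fin d) (Fin d) ℝ) (hp : Sp.PosDef) (hl : Sl.PosDef) :
    ((Sl⁻¹ + Sp⁻¹)⁻¹ * Sp⁻¹) * (Sp + Sp * Sl⁻¹ * Sp) * ((Sl⁻¹ + Sp⁻¹)⁻¹ * Sp⁻¹)ᵀ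
      = (Sl⁻¹ + Sp⁻¹)⁻¹ := by
  have hpu : IsUnit Sp.det := hp.det_pos.ne'.isUnit
  have hApd : (Sl⁻¹ + Sp⁻¹).PosDef := hl.inv.add hp.inv
  have hAu : IsUnit (Sl⁻¹ + Sp⁻¹).det := hApd.det_pos.ne'.isUnit
  have h1 : Sp⁻¹ * Sp = 1 := Matrix.nonsing_inv_mul _ hpu
  have h2 : Sp * Sp⁻¹ = 1 := Matrix.mul_nonsing_inv _ hpu
  have h3 : (Sl⁻¹ + Sp⁻¹)⁻¹ * (Sl⁻¹ + Sp⁻¹) = 1 := Matrix.nonsing_inv_mul _ hAu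
  have hpT : Sp⁻¹ᵀ = Sp⁻¹ := by
    have := hp.isHermitian.inv.eq
    simpa [Matrix.conjTranspose_eq_transpose_of_trivial] using this
  have hAT : ((Sl⁻¹ + Sp⁻¹)⁻¹)ᵀ = (Sl⁻¹ + Sp⁻¹)⁻¹ := by
    have := hApd.isHermitian.inv.eq
    simpa [Matrix.conjTranspose_eq_transpose_of_trivial] using this
  set A := (Sl⁻¹ + Sp⁻¹)⁻¹ with hA
  have hBT : (A * Sp⁻¹)ᵀ = Sp⁻¹ * A := by
    rw [Matrix.transpose_mul, hpT, hAT]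
  rw [hBT]
  have hmid : Sp⁻¹ * (Sp + Sp * Sl⁻¹ * Sp) * Sp⁻¹ = Sl⁻¹ + Sp⁻¹ := by
    rw [Matrix.mul_add, Matrix.add_mul, h1, Matrix.one_mul,
      show Sp⁻¹ * (Sp * Sl⁻¹ * Sp) = Sl⁻¹ * Sp by
        rw [← Matrix.mul_assoc, ← Matrix.mul_assoc, h1, Matrix.one_mul],
      Matrix.mul_assoc, h2, Matrix.mul_one, add_comm]
  calc A * Sp⁻¹ * (Sp + Sp * Sl⁻¹ * Sp) * (Sp⁻¹ * A)
      = A * (Sp⁻¹ * (Sp + Sp * Sl⁻¹ * Sp) * Sp⁻¹) * A := by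
        simp only [Matrix.mul_assoc]
    _ = A * (Sl⁻¹ + Sp⁻¹) * A := by rw [hmid]
    _ = A := by rw [h3, Matrix.one_mul]

/-- If `θ₀⁽¹⁾, …, θ₀⁽ᴹ⁾` are i.i.d. with mean `μ_prior` and covariance
`Σ₀ = Σ_prior + Σ_prior Σ_like⁻¹ Σ_prior`, then the ensemble average
`(1/M) Σᵢ μ_MAP(θ₀⁽ⁱ⁾)` has expectation `μ_post` and covariance `(1/M) Σ_post`, where
`A = Σ_post = (Σ_like⁻¹ + Σ_prior⁻¹)⁻¹` and
`μ_MAP(v) = A (Σ_like⁻¹ μ_like + Σ_prior⁻¹ v)`. -/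
theorem stmt18 {d M : ℕ} (hM : 0 < M) {Ω : Type*} [MeasureSpace Ω]
    [IsProbabilityMeasure (ℙ : Measure Ω)]
    (Sp Sl : Matrix (Fin d) (Fin d) ℝ) (hp : Sp.PosDef) (hl : Sl.PosDef)
    (μp μl : Fin d → ℝ) (θ₀ : Fin M → Ω → Fin d → ℝ)
    (hmeas : ∀ i, Measurable (θ₀ i))
    (hL2 : ∀ i k, MemLp (fun ω => θ₀ i ω k) 2 ℙ)
    (hindep : iIndepFun θ₀ ℙ)
    (hident : ∀ i j, IdentDistrib (θ₀ i) (θ₀ j) ℙ ℙ)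
    (hmean : ∀ i, vmean (θ₀ i) = μp)
    (hcov : ∀ i, vcov (θ₀ i) = Sp + Sp * Sl⁻¹ * Sp) :
    vmean (fun ω => (M : ℝ)⁻¹ •
        ∑ i : Fin M, (Sl⁻¹ + Sp⁻¹)⁻¹ *ᵥ (Sl⁻¹ *ᵥ μl + Sp⁻¹ *ᵥ θ₀ i ω))
      = (Sl⁻¹ + Sp⁻¹)⁻¹ *ᵥ (Sl⁻¹ *ᵥ μl + Sp⁻¹ *ᵥ μp)
    ∧ vcov (fun ω => (M : ℝ)⁻¹ •
        ∑ i : Fin M, (Sl⁻¹ + Sp⁻¹)⁻¹ *ᵥ (Sl⁻¹ *ᵥ μl + Sp⁻¹ *ᵥ θ₀ i ω))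
      = (M : ℝ)⁻¹ • (Sl⁻¹ + Sp⁻¹)⁻¹ := by
  classical
  have hMne : (M : ℝ) ≠ 0 := Nat.cast_ne_zero.mpr hM.ne'
  set A : Matrix (Fin d) (Fin d) ℝ := (Sl⁻¹ + Sp⁻¹)⁻¹ with hA
  set B : Matrix (Fin d) (Fin d) ℝ := A * Sp⁻¹ with hB
  set c : Fin d → ℝ := A *ᵥ (Sl⁻¹ *ᵥ μl) with hc
  set S₀ : Matrix (Fin d) (Fin d) ℝ := Sp + Sp * Sl⁻¹ * Sp with hS0
  set X : Ω → Fin d → ℝ :=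
    fun ω => (M : ℝ)⁻¹ • ∑ i : Fin M, A *ᵥ (Sl⁻¹ *ᵥ μl + Sp⁻¹ *ᵥ θ₀ i ω) with hX
  -- scalar form of X
  have hXeq : ∀ ω i, X ω i = (M : ℝ)⁻¹ * ∑ a : Fin M, (c i + ∑ k, B i k * θ₀ a ω k) := by
    intro ω i
    simp only [hX, Pi.smul_apply, smul_eq_mul, Finset.sum_apply]
    congr 1
    refine Finset.sum_congr rfl fun a _ => ?_
    simp only [Matrix.mulVec_add, ← Matrix.mulVec_mulVec, Matrix.mulVec, dotProduct,
      hc, hB, Pi.add_apply, mul_add, Finset.sum_add_distrib]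
    congr 1
    simp only [Matrix.mul_apply, Finset.sum_mul, Finset.mul_sum, mul_assoc]
    rw [Finset.sum_comm]
  -- basic integrability
  have hInt1 : ∀ a k, Integrable (fun ω => θ₀ a ω k) ℙ :=
    fun a k => (hL2 a k).integrable one_le_two
  have hmean' : ∀ a k, ∫ ω, θ₀ a ω k = μp k := fun a k => congrFun (hmean a) k
  have hL2' : ∀ a k, MemLp (fun ω => θ₀ a ω k - μp k) 2 ℙ :=
    fun a k => (hL2 a k).sub (memLp_const _)
  have hInt0 : ∀ a k, Integrable (fun ω => θ₀ a ω k - μp k) ℙ :=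
    fun a k => (hInt1 a k).sub (integrable_const _)
  have hZero : ∀ a k, ∫ ω, (θ₀ a ω k - μp k) = 0 := by
    intro a k
    rw [integral_sub (hInt1 a k) (integrable_const _), hmean' a k, integral_const]
    simp
  have hIntProd : ∀ a b k l,
      Integrable (fun ω => (θ₀ a ω k - μp k) * (θ₀ b ω l - μp l)) ℙ :=
    fun a b k l => memL2_mul_integrable (hL2' a k) (hL2' b l)
  -- key second moments
  have hkey : ∀ a b k l, ∫ ω, (θ₀ a ω k - μp k) * (θ₀ b ω l - μp l)
      = if a = b then S₀ k l else 0 := by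
    intro a b k l
    by_cases hab : a = b
    · subst hab
      rw [if_pos rfl]
      have h := congrFun (congrFun (hcov a) k) l
      simp only [vcov, Matrix.of_apply, hmean] at h
      exact h
    · rw [if_neg hab]
      have hφ : Measurable (fun v : Fin d → ℝ => v k - μp k) :=
        (measurable_pi_apply k).sub measurable_const
      have hψ : Measurable (fun v : Fin d → ℝ => v l - μp l) :=
        (measurable_pi_apply l).sub measurable_const
      have hind : IndepFun (fun ω => θ₀ a ω k - μp k) (fun ω => θ₀ b ω l - μp l) ℙ :=
        (hindep.indepFun hab).comp hφ hψ
      have := hind.integral_mul_eq_mul_integral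
        ((hφ.comp (hmeas a)).aestronglyMeasurable)
        ((hψ.comp (hmeas b)).aestronglyMeasurable)
      simp only [Pi.mul_apply] at this
      rw [show (∫ ω, (θ₀ a ω k - μp k) * (θ₀ b ω l - μp l))
          = ∫ ω, ((fun ω => θ₀ a ω k - μp k) * (fun ω => θ₀ b ω l - μp l)) ω from rfl]
      simp only [Pi.mul_apply]
      rw [this, hZero a k, hZero b l, mul_zero]
  -- mean of X
  have hIntInner : ∀ (i : Fin d) (a : Fin M),
      Integrable (fun ω => c i + ∑ k, B i k * θ₀ a ω k) ℙ := by
    intro i a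
    exact (integrable_const _).add (integrable_finset_sum _ fun k _ => (hInt1 a k).const_mul (B i k))
  have hmval : ∀ i, vmean X i = c i + ∑ k, B i k * μp k := by
    intro i
    show (∫ ω, X ω i) = _
    calc ∫ ω, X ω i
        = ∫ ω, (M : ℝ)⁻¹ * ∑ a : Fin M, (c i + ∑ k, B i k * θ₀ a ω k) := by
          exact integral_congr_ae (Filter.Eventually.of_forall fun ω => hXeq ω i)
      _ = (M : ℝ)⁻¹ * ∑ a : Fin M, ∫ ω, (c i + ∑ k, B i k * θ₀ a ω k) := by
          rw [integral_const_mul, integral_finset_sum _ fun a _ => hIntInner i a]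
      _ = (M : ℝ)⁻¹ * ∑ a : Fin M, (c i + ∑ k, B i k * μp k) := by
          congr 1
          refine Finset.sum_congr rfl fun a _ => ?_
          rw [integral_add (integrable_const _)
            (integrable_finset_sum _ fun k _ => (hInt1 a k).const_mul (B i k)),
            integral_const, integral_finset_sum _ fun k _ => (hInt1 a k).const_mul (B i k)]
          simp [integral_const_mul, hmean']
      _ = c i + ∑ k, B i k * μp k := by
          rw [Finset.sum_const, Finset.card_univ, Fintype.card_fin, nsmul_eq_mul,
            ← mul_assoc, inv_mul_cancel₀ hMne, one_mul]
  constructor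
  · funext i
    rw [show vmean X i = c i + ∑ k, B i k * μp k from hmval i]
    simp only [Matrix.mulVec_add, ← Matrix.mulVec_mulVec, Matrix.mulVec, dotProduct,
      hc, hB, Pi.add_apply, mul_add, Finset.sum_add_distrib]
    congr 1
    simp only [Matrix.mul_apply, Finset.sum_mul, Finset.mul_sum, mul_assoc]
    rw [Finset.sum_comm]
  · -- covariance
    have hdev : ∀ ω i, X ω i - vmean X i
        = (M : ℝ)⁻¹ * ∑ a : Fin M, ∑ k, B i k * (θ₀ a ω k - μp k) := by
      intro ω i
      rw [hXeq ω i, hmval i]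
      rw [show c i + ∑ k, B i k * μp k
          = (M : ℝ)⁻¹ * ∑ _a : Fin M, (c i + ∑ k, B i k * μp k) by
        rw [Finset.sum_const, Finset.card_univ, Fintype.card_fin, nsmul_eq_mul,
          ← mul_assoc, inv_mul_cancel₀ hMne, one_mul]]
      rw [← mul_sub, ← Finset.sum_sub_distrib]
      congr 1
      refine Finset.sum_congr rfl fun a _ => ?_
      rw [add_sub_add_left_eq_sub, ← Finset.sum_sub_distrib]
      exact Finset.sum_congr rfl fun k _ => (mul_sub _ _ _).symm
    ext i j
    show (∫ ω, (X ω i - vmean X i) * (X ω j - vmean X j)) = ((M : ℝ)⁻¹ • A) i j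
    have hInt4 : ∀ (a b : Fin M) (k l : Fin d),
        Integrable (fun ω => B i k * B j l * ((θ₀ a ω k - μp k) * (θ₀ b ω l - μp l))) ℙ :=
      fun a b k l => (hIntProd a b k l).const_mul _
    calc ∫ ω, (X ω i - vmean X i) * (X ω j - vmean X j)
        = ∫ ω, (M : ℝ)⁻¹ * (M : ℝ)⁻¹ * ∑ a : Fin M, ∑ b : Fin M, ∑ k, ∑ l,
            B i k * B j l * ((θ₀ a ω k - μp k) * (θ₀ b ω l - μp l)) := by
          refine integral_congr_ae (Filter.Eventually.of_forall fun ω => ?_)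
          show (X ω i - vmean X i) * (X ω j - vmean X j) = _
          rw [hdev ω i, hdev ω j, mul_mul_mul_comm]
          congr 1
          rw [Finset.sum_mul_sum]
          refine Finset.sum_congr rfl fun a _ => Finset.sum_congr rfl fun b _ => ?_
          rw [Finset.sum_mul_sum]
          exact Finset.sum_congr rfl fun k _ => Finset.sum_congr rfl fun l _ => by ring
      _ = (M : ℝ)⁻¹ * (M : ℝ)⁻¹ * ∑ a : Fin M, ∑ b : Fin M, ∑ k, ∑ l,
            B i k * B j l * ∫ ω, (θ₀ a ω k - μp k) * (θ₀ b ω l - μp l) := by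
          rw [integral_const_mul]
          congr 1
          rw [integral_finset_sum _ fun a _ => integrable_finset_sum _ fun b _ =>
            integrable_finset_sum _ fun k _ => integrable_finset_sum _ fun l _ => hInt4 a b k l]
          refine Finset.sum_congr rfl fun a _ => ?_
          rw [integral_finset_sum _ fun b _ =>
            integrable_finset_sum _ fun k _ => integrable_finset_sum _ fun l _ => hInt4 a b k l]
          refine Finset.sum_congr rfl fun b _ => ?_
          rw [integral_finset_sum _ fun k _ => integrable_finset_sum _ fun l _ => hInt4 a b k l]
          refine Finset.sum_congr rfl fun k _ => ?_
          rw [integral_finset_sum _ fun l _ => hInt4 a b k l]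
          exact Finset.sum_congr rfl fun l _ => integral_const_mul _ _
      _ = (M : ℝ)⁻¹ * (M : ℝ)⁻¹ * ∑ a : Fin M,
            (∑ k, ∑ l, B i k * B j l * S₀ k l) := by
          congr 1
          refine Finset.sum_congr rfl fun a _ => ?_
          rw [show (∑ b : Fin M, ∑ k, ∑ l, B i k * B j l *
              ∫ ω, (θ₀ a ω k - μp k) * (θ₀ b ω l - μp l))
            = ∑ b : Fin M, if a = b then ∑ k, ∑ l, B i k * B j l * S₀ k l else 0 from
            Finset.sum_congr rfl fun b _ => by
              simp only [hkey, mul_ite, mul_zero]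
              split <;> simp]
          simp
      _ = (M : ℝ)⁻¹ * (B * S₀ * Bᵀ) i j := by
          rw [Finset.sum_const, Finset.card_univ, Fintype.card_fin, nsmul_eq_mul,
            show (M:ℝ)⁻¹ * (M:ℝ)⁻¹ * ((M:ℝ) * ∑ k, ∑ l, B i k * B j l * S₀ k l)
              = (M:ℝ)⁻¹ * (((M:ℝ)⁻¹ * (M:ℝ)) * ∑ k, ∑ l, B i k * B j l * S₀ k l) by ring,
            inv_mul_cancel₀ hMne, one_mul]
          congr 1
          rw [Matrix.mul_apply]
          rw [Finset.sum_comm]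
          refine Finset.sum_congr rfl fun l _ => ?_
          rw [Matrix.mul_apply, Matrix.transpose_apply, Finset.sum_mul]
          exact Finset.sum_congr rfl fun k _ => by ring
      _ = ((M : ℝ)⁻¹ • A) i j := by
          rw [hB, hS0, hA, matalg Sp Sl hp hl]
          simp
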